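/- Let β > 0, m > 0 and λ₊, λ₋ ≥ 0 be real numbers, and set ω_± = √(λ_± + m²). Then ( 1/(e^{βω₊}+1) − 1/(e^{βω₋}+1) ) · ( 1/(e^{βω₊}−1) − 1/(e^{βω₋}−1) ) = ∫₀^∞ ∫₀^∞ h_f(t) · h_b(s) · exp(−m²β²(t+s)) · ( e^{−tβ²λ₊} − e^{−tβ²λ₋} ) · ( e^{−sβ²λ₊} − e^{−sβ²λ₋} ) dt ds, where h_f(t) = (4π)^{−1/2} t^{−3/2} Σ_{k=1}^∞ (−1)^{k+1} k e^{−k²/(4t)} and h_b(t) = (4π)^{−1/2} t^{−3/2} Σ_{k=1}^∞ k e^{−k²/(4t)}, the double integral being absolutely convergent. (Scalar, one-mode version of the heat-trace representation of the bosonic Bogolyubov invariant B_b(β).) -/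

import Mathlib

open MeasureTheory
open Set Real

/-- The fermionic subordination kernel at zero chemical potential:
`h_f(t) = (4π)^{−1/2} t^{−3/2} Σ_{k≥1} (−1)^{k+1} k e^{−k²/(4t)}`. -/
noncomputable def hfKernel (t : ℝ) : ℝ :=
  (4 * Real.pi) ^ (-(1 : ℝ) / 2) * t ^ (-(3 : ℝ) / 2) *
    ∑' k : ℕ, (-1 : ℝ) ^ k * ((k : ℝ) + 1) * Real.exp (-((k : ℝ) + 1) ^ 2 / (4 * t))

/-- The bosonic subordination kernel at zero chemical potential:
`h_b(t) = (4π)^{−1/2} t^{−3/2} Σ_{k≥1} k e^{−k²/(4t)}`. -/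
noncomputable def hbKernel (t : ℝ) : ℝ :=
  (4 * Real.pi) ^ (-(1 : ℝ) / 2) * t ^ (-(3 : ℝ) / 2) *
    ∑' k : ℕ, ((k : ℝ) + 1) * Real.exp (-((k : ℝ) + 1) ^ 2 / (4 * t))


-- Substitution u ↦ u - b/u maps Ioi 0 onto ℝ
lemma image_sub_div (b : ℝ) (hb : 0 < b) :
    (fun u : ℝ => u - b / u) '' Ioi 0 = univ := by
  ext v
  simp only [mem_image, mem_Ioi, mem_univ, iff_true]
  set s := Real.sqrt (v ^ 2 + 4 * b) with hs
  have hs2 : s ^ 2 = v ^ 2 + 4 * b := Real.sq_sqrt (by positivity)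
  have hsv : |v| < s := by
    rw [← Real.sqrt_sq_eq_abs]
    exact Real.sqrt_lt_sqrt (sq_nonneg v) (by linarith)
  have hu : 0 < (v + s) / 2 := by
    have := neg_abs_le v
    linarith [abs_nonneg v]
  refine ⟨(v + s) / 2, hu, ?_⟩
  have hvs : (0:ℝ) < v + s := by linarith
  field_simp
  nlinarith [hs2]

lemma strictMono_sub_div (b : ℝ) (hb : 0 < b) :
    StrictMonoOn (fun u : ℝ => u - b / u) (Ioi 0) := by
  intro u hu v hv huv
  simp only [mem_Ioi] at hu hv
  have : b / v < b / u := div_lt_div_of_pos_left hb hu huv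
  simp only
  linarith

lemma hasDeriv_sub_div (b : ℝ) {x : ℝ} (hx : 0 < x) :
    HasDerivAt (fun u : ℝ => u - b / u) (1 + b / x ^ 2) x := by
  have h1 : HasDerivAt (fun u : ℝ => b / u) (-(b / x ^ 2)) x := by
    have h := (hasDerivAt_inv (ne_of_gt hx)).const_mul b
    have heq : (fun u : ℝ => b / u) = fun u => b * u⁻¹ := by
      funext u; rw [div_eq_mul_inv]
    rw [heq]
    refine h.congr_deriv ?_
    ring
  have := (hasDerivAt_id x).sub h1
  refine this.congr_deriv ?_
  ring

lemma hasDeriv_div (b : ℝ) {x : ℝ} (hx : x ≠ 0) :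
    HasDerivAt (fun u : ℝ => b / u) (-(b / x ^ 2)) x := by
  have h := (hasDerivAt_inv hx).const_mul b
  have heq : (fun u : ℝ => b / u) = fun u => b * u⁻¹ := by
    funext u; rw [div_eq_mul_inv]
  rw [heq]
  refine h.congr_deriv ?_
  ring

lemma image_div (b : ℝ) (hb : 0 < b) : (fun u : ℝ => b / u) '' Ioi 0 = Ioi 0 := by
  ext v
  simp only [mem_image, mem_Ioi]
  constructor
  · rintro ⟨u, hu, rfl⟩; positivity
  · intro hv; exact ⟨b / v, by positivity, by field_simp⟩

lemma integrable_exp_sub_sq (b : ℝ) (hb : 0 < b) :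
    IntegrableOn (fun u : ℝ => Real.exp (-(u - b / u) ^ 2)) (Ioi 0) := by
  have hmeas : Measurable (fun u : ℝ => Real.exp (-(u - b / u) ^ 2)) := by fun_prop
  refine Integrable.mono
    ((integrable_exp_neg_mul_sq one_pos).const_mul (Real.exp (2 * b))).restrict
    hmeas.aestronglyMeasurable ?_
  filter_upwards [ae_restrict_mem measurableSet_Ioi] with u hu
  simp only [mem_Ioi] at hu
  rw [Real.norm_eq_abs, Real.norm_eq_abs, abs_of_pos (by positivity), abs_of_pos (by positivity),
    ← Real.exp_add]
  apply Real.exp_le_exp.2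
  have h1 : (u - b / u) ^ 2 = u ^ 2 - 2 * b + (b / u) ^ 2 := by
    field_simp; ring
  nlinarith [sq_nonneg (b / u), sq_nonneg u]

-- ∫_{0}^{∞} exp(-(u - b/u)^2) du = √π / 2
lemma integral_exp_sub_sq (b : ℝ) (hb : 0 < b) :
    ∫ u in Ioi (0:ℝ), Real.exp (-(u - b / u) ^ 2) = Real.sqrt Real.pi / 2 := by
  set g2 : ℝ → ℝ := fun u => Real.exp (-(u - b / u) ^ 2) with hg2
  -- substitution B : ∫ g2 = ∫ (b/u²) g2
  have hB : ∫ u in Ioi (0:ℝ), g2 u = ∫ u in Ioi (0:ℝ), (b / u ^ 2) * g2 u := by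
    have := integral_image_eq_integral_abs_deriv_smul measurableSet_Ioi
      (fun x hx => (hasDeriv_div b (ne_of_gt (mem_Ioi.1 hx))).hasDerivWithinAt)
      (fun x hx y hy hxy => by
        simp only [mem_Ioi] at hx hy
        field_simp at hxy
        exact hxy.symm) g2
    rw [image_div b hb] at this
    rw [this]
    refine setIntegral_congr_fun measurableSet_Ioi (fun u hu => ?_)
    simp only [mem_Ioi] at hu
    rw [smul_eq_mul, abs_neg, abs_of_pos (by positivity : (0:ℝ) < b / u ^ 2)]
    have h3 : b / (b / u) = u := by field_simp
    have : g2 (b / u) = g2 u := by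
      simp only [hg2, h3]
      congr 1
      ring
    rw [this]
  -- substitution A : √π = ∫ (1 + b/u²) g2
  have hA : Real.sqrt Real.pi = ∫ u in Ioi (0:ℝ), (1 + b / u ^ 2) * g2 u := by
    have := integral_image_eq_integral_abs_deriv_smul measurableSet_Ioi
      (fun x hx => (hasDeriv_sub_div b (mem_Ioi.1 hx)).hasDerivWithinAt)
      (strictMono_sub_div b hb).injOn (fun v => Real.exp (-v ^ 2))
    rw [image_sub_div b hb, Measure.restrict_univ] at this
    have hg : ∫ x : ℝ, Real.exp (-x ^ 2) = Real.sqrt Real.pi := by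
      simpa using integral_gaussian 1
    rw [← hg, this]
    refine setIntegral_congr_fun measurableSet_Ioi (fun u hu => ?_)
    simp only [mem_Ioi] at hu
    rw [smul_eq_mul, abs_of_pos (by positivity : (0:ℝ) < 1 + b / u ^ 2)]
  -- combine
  have hI1 := integrable_exp_sub_sq b hb
  have hI2 : IntegrableOn (fun u : ℝ => (b / u ^ 2) * g2 u) (Ioi 0) := by
    have hiff := integrableOn_image_iff_integrableOn_abs_deriv_smul measurableSet_Ioi
      (fun x hx => (hasDeriv_div b (ne_of_gt (mem_Ioi.1 hx))).hasDerivWithinAt)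
      (fun x hx y hy hxy => by
        simp only [mem_Ioi] at hx hy
        field_simp at hxy
        exact hxy.symm) g2
    rw [image_div b hb] at hiff
    refine (hiff.1 hI1).congr_fun (fun u hu => ?_) measurableSet_Ioi
    simp only [mem_Ioi] at hu
    beta_reduce
    rw [smul_eq_mul, abs_neg, abs_of_pos (by positivity : (0:ℝ) < b / u ^ 2)]
    have h3 : b / (b / u) = u := by field_simp
    have : g2 (b / u) = g2 u := by
      simp only [hg2, h3]
      congr 1
      ring
    rw [this]
  have hsplit : ∫ u in Ioi (0:ℝ), (1 + b / u ^ 2) * g2 u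
      = (∫ u in Ioi (0:ℝ), g2 u) + ∫ u in Ioi (0:ℝ), (b / u ^ 2) * g2 u := by
    rw [← integral_add hI1 hI2]
    refine setIntegral_congr_fun measurableSet_Ioi (fun u hu => ?_)
    ring
  rw [hsplit, ← hB] at hA
  linarith

lemma integral_J (b : ℝ) (hb : 0 < b) :
    ∫ u in Ioi (0:ℝ), Real.exp (-(u ^ 2 + b ^ 2 / u ^ 2))
      = Real.sqrt Real.pi / 2 * Real.exp (-(2 * b)) := by
  have hpt : ∀ u ∈ Ioi (0:ℝ), Real.exp (-(u ^ 2 + b ^ 2 / u ^ 2))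
      = Real.exp (-(2 * b)) * Real.exp (-(u - b / u) ^ 2) := by
    intro u hu
    simp only [mem_Ioi] at hu
    rw [← Real.exp_add]
    congr 1
    field_simp
    ring
  rw [setIntegral_congr_fun measurableSet_Ioi hpt, integral_const_mul,
    integral_exp_sub_sq b hb]
  ring

lemma integrable_J (b : ℝ) (hb : 0 < b) :
    IntegrableOn (fun u : ℝ => Real.exp (-(u ^ 2 + b ^ 2 / u ^ 2))) (Ioi 0) := by
  have hpt : ∀ u ∈ Ioi (0:ℝ), Real.exp (-(2 * b)) * Real.exp (-(u - b / u) ^ 2)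
      = Real.exp (-(u ^ 2 + b ^ 2 / u ^ 2)) := by
    intro u hu
    simp only [mem_Ioi] at hu
    rw [← Real.exp_add]
    congr 1
    field_simp
    ring
  exact IntegrableOn.congr_fun ((integrable_exp_sub_sq b hb).const_mul (Real.exp (-(2 * b))))
    hpt measurableSet_Ioi

-- the substitution t = k²/(4u²)
lemma hasDeriv_sq_inv (k : ℝ) {x : ℝ} (hx : 0 < x) :
    HasDerivAt (fun u : ℝ => k ^ 2 / (4 * u ^ 2)) (-(k ^ 2 / (2 * x ^ 3))) x := by
  have h1 : HasDerivAt (fun u : ℝ => u ^ 2) (2 * x) x := by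
    simpa using hasDerivAt_pow 2 x
  have h2 := (h1.inv (by positivity)).const_mul (k ^ 2 / 4)
  have heq : (fun u : ℝ => k ^ 2 / (4 * u ^ 2)) = fun u => k ^ 2 / 4 * (u ^ 2)⁻¹ := by
    funext u; field_simp
  rw [heq]
  refine h2.congr_deriv ?_
  field_simp
  ring

lemma strictAnti_sq_inv (k : ℝ) (hk : 0 < k) :
    StrictAntiOn (fun u : ℝ => k ^ 2 / (4 * u ^ 2)) (Ioi 0) := by
  intro a ha b hb hab
  simp only [mem_Ioi] at ha hb
  exact div_lt_div_of_pos_left (by positivity) (by positivity) (by nlinarith)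

lemma image_sq_inv (k : ℝ) (hk : 0 < k) :
    (fun u : ℝ => k ^ 2 / (4 * u ^ 2)) '' Ioi 0 = Ioi 0 := by
  ext t
  simp only [mem_image, mem_Ioi]
  constructor
  · rintro ⟨u, hu, rfl⟩; positivity
  · intro ht
    refine ⟨k / (2 * Real.sqrt t), by positivity, ?_⟩
    have hst : Real.sqrt t ^ 2 = t := Real.sq_sqrt ht.le
    field_simp
    nlinarith [hst]

lemma core_pointwise (k c : ℝ) (hk : 0 < k) {u : ℝ} (hu : 0 < u) :
    |(-(k ^ 2 / (2 * u ^ 3)))| •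
        ((k ^ 2 / (4 * u ^ 2)) ^ (-(3:ℝ)/2) *
          Real.exp (-(k ^ 2 / (4 * (k ^ 2 / (4 * u ^ 2)))) - c ^ 2 * (k ^ 2 / (4 * u ^ 2))))
      = 4 / k * Real.exp (-(u ^ 2 + (c * k / 2) ^ 2 / u ^ 2)) := by
  have hbase : (0:ℝ) < k / (2 * u) := by positivity
  have hr : (k ^ 2 / (4 * u ^ 2)) ^ (-(3:ℝ)/2) = 8 * u ^ 3 / k ^ 3 := by
    have h1 : k ^ 2 / (4 * u ^ 2) = (k / (2 * u)) ^ (2:ℕ) := by ring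
    rw [h1, ← Real.rpow_natCast (k / (2 * u)) 2, ← Real.rpow_mul hbase.le]
    norm_num
    rw [div_pow, inv_div]
    field_simp
    ring
  have he : -(k ^ 2 / (4 * (k ^ 2 / (4 * u ^ 2)))) - c ^ 2 * (k ^ 2 / (4 * u ^ 2))
      = -(u ^ 2 + (c * k / 2) ^ 2 / u ^ 2) := by
    field_simp
    ring
  rw [smul_eq_mul, hr, he, abs_neg, abs_of_pos (by positivity : (0:ℝ) < k ^ 2 / (2 * u ^ 3))]
  field_simp
  ring

lemma core_integral (k c : ℝ) (hk : 0 < k) (hc : 0 < c) :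
    (∫ t in Ioi (0:ℝ), t ^ (-(3:ℝ)/2) * Real.exp (-(k ^ 2 / (4 * t)) - c ^ 2 * t))
      = 2 * Real.sqrt Real.pi / k * Real.exp (-(k * c)) := by
  have hsub := integral_image_eq_integral_abs_deriv_smul measurableSet_Ioi
    (fun x hx => (hasDeriv_sq_inv k (mem_Ioi.1 hx)).hasDerivWithinAt)
    (strictAnti_sq_inv k hk).injOn
    (fun t : ℝ => t ^ (-(3:ℝ)/2) * Real.exp (-(k ^ 2 / (4 * t)) - c ^ 2 * t))
  rw [image_sq_inv k hk] at hsub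
  rw [hsub, setIntegral_congr_fun measurableSet_Ioi
    (fun u hu => core_pointwise k c hk (mem_Ioi.1 hu)), integral_const_mul,
    integral_J (c * k / 2) (by positivity)]
  rw [show -(2 * (c * k / 2)) = -(k * c) by ring]
  field_simp
  ring

lemma core_integrable (k c : ℝ) (hk : 0 < k) (hc : 0 < c) :
    IntegrableOn (fun t : ℝ => t ^ (-(3:ℝ)/2) * Real.exp (-(k ^ 2 / (4 * t)) - c ^ 2 * t))
      (Ioi 0) := by
  have hiff := integrableOn_image_iff_integrableOn_abs_deriv_smul measurableSet_Ioi
    (fun x hx => (hasDeriv_sq_inv k (mem_Ioi.1 hx)).hasDerivWithinAt)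
    (strictAnti_sq_inv k hk).injOn
    (fun t : ℝ => t ^ (-(3:ℝ)/2) * Real.exp (-(k ^ 2 / (4 * t)) - c ^ 2 * t))
  rw [image_sq_inv k hk] at hiff
  rw [hiff]
  exact IntegrableOn.congr_fun ((integrable_J (c * k / 2) (by positivity)).const_mul (4 / k))
    (fun u hu => (core_pointwise k c hk (mem_Ioi.1 hu)).symm) measurableSet_Ioi

lemma integrable_tsum_helper {μ : Measure ℝ} {F : ℕ → ℝ → ℝ}
    (hF_int : ∀ i, Integrable (F i) μ)
    (hsum : ∀ᵐ t ∂μ, Summable fun i => F i t)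
    (hF_sum : Summable fun i => ∫ a, ‖F i a‖ ∂μ) :
    Integrable (fun a => ∑' i, F i a) μ := by
  refine ⟨?_, ?_⟩
  · refine aestronglyMeasurable_of_tendsto_ae Filter.atTop
      (f := fun n t => ∑ i ∈ Finset.range n, F i t) (fun n => ?_) ?_
    · exact Finset.aestronglyMeasurable_fun_sum _ (fun i _ => (hF_int i).1)
    · filter_upwards [hsum] with t ht
      exact ht.hasSum.tendsto_sum_nat
  · rw [hasFiniteIntegral_iff_norm]
    calc ∫⁻ a, ENNReal.ofReal ‖∑' i, F i a‖ ∂μ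
        ≤ ∫⁻ a, ∑' i, (‖F i a‖₊ : ENNReal) ∂μ := by
          refine lintegral_mono fun a => ?_
          by_cases h : Summable fun i => ‖F i a‖
          · calc ENNReal.ofReal ‖∑' i, F i a‖
                ≤ ENNReal.ofReal (∑' i, ‖F i a‖) :=
                  ENNReal.ofReal_le_ofReal (norm_tsum_le_tsum_norm h)
              _ = ∑' i, ENNReal.ofReal ‖F i a‖ :=
                  ENNReal.ofReal_tsum_of_nonneg (fun i => norm_nonneg _) h
              _ = ∑' i, (‖F i a‖₊ : ENNReal) := by
                  exact tsum_congr fun i => ofReal_norm (F i a)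
          · have h2 : ¬ Summable fun i => F i a := fun hs => h hs.abs
            rw [tsum_eq_zero_of_not_summable h2]
            simp
      _ = ∑' i, ∫⁻ a, (‖F i a‖₊ : ENNReal) ∂μ :=
          lintegral_tsum (fun i => (hF_int i).1.enorm)
      _ = ∑' i, ENNReal.ofReal (∫ a, ‖F i a‖ ∂μ) := by
          refine tsum_congr fun i => ?_
          have := lintegral_coe_eq_integral (fun a => ‖F i a‖₊) (by simpa using (hF_int i).norm)
          simpa using this
      _ = ENNReal.ofReal (∑' i, ∫ a, ‖F i a‖ ∂μ) :=
          (ENNReal.ofReal_tsum_of_nonneg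
            (fun i => integral_nonneg fun a => norm_nonneg _) hF_sum).symm
      _ < ⊤ := ENNReal.ofReal_lt_top

lemma summable_aux {t : ℝ} (ht : 0 < t) :
    Summable fun k : ℕ => ((k : ℝ) + 1) * Real.exp (-((k : ℝ) + 1) ^ 2 / (4 * t)) := by
  set r : ℝ := Real.exp (-1 / (4 * t)) with hr
  have hr0 : 0 ≤ r := Real.exp_nonneg _
  have hr1 : r < 1 := by
    rw [hr, Real.exp_lt_one_iff]
    exact div_neg_of_neg_of_pos (by norm_num) (by positivity)
  have hmaj : Summable fun n : ℕ => (n : ℝ) * r ^ n :=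
    by simpa using summable_pow_mul_geometric_of_norm_lt_one 1 (by rwa [Real.norm_eq_abs, abs_of_nonneg hr0])
  have hmaj2 : Summable fun k : ℕ => ((k : ℝ) + 1) * r ^ (k + 1) := by
    have := (summable_nat_add_iff 1).2 hmaj
    simpa [Nat.cast_add] using this
  refine Summable.of_nonneg_of_le (fun k => by positivity) (fun k => ?_) hmaj2
  have h1 : Real.exp (-((k : ℝ) + 1) ^ 2 / (4 * t)) ≤ r ^ (k + 1) := by
    have : r ^ (k + 1) = Real.exp (((k : ℕ) + 1 : ℕ) * (-1 / (4 * t))) := by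
      rw [Real.exp_nat_mul]
    rw [this]
    apply Real.exp_le_exp.2
    have h2 : ((k : ℕ) + 1 : ℕ) * (-1 / (4 * t)) = -((k:ℝ) + 1) / (4 * t) := by
      push_cast; ring
    rw [h2, div_le_div_iff_of_pos_right (by positivity : (0:ℝ) < 4 * t)]
    have hk0 : (0:ℝ) ≤ (k:ℝ) := Nat.cast_nonneg k
    nlinarith
  have h0 : (0:ℝ) ≤ (k : ℝ) + 1 := by positivity
  calc ((k : ℝ) + 1) * Real.exp (-((k : ℝ) + 1) ^ 2 / (4 * t))
      ≤ ((k : ℝ) + 1) * r ^ (k + 1) := by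
        exact mul_le_mul_of_nonneg_left h1 h0

lemma A_mul_sqrt : (4 * Real.pi) ^ (-(1:ℝ)/2) = (2 * Real.sqrt Real.pi)⁻¹ := by
  have hs : (0:ℝ) < Real.sqrt Real.pi := Real.sqrt_pos.2 Real.pi_pos
  have h : (4 * Real.pi) = (2 * Real.sqrt Real.pi) ^ (2:ℕ) := by
    rw [mul_pow, Real.sq_sqrt Real.pi_pos.le]; norm_num
  rw [h, ← Real.rpow_natCast (2 * Real.sqrt Real.pi) 2, ← Real.rpow_mul (by positivity)]
  norm_num
  rw [Real.rpow_neg_one, mul_inv]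
  ring

lemma series_integral (a : ℕ → ℝ) (ha : ∀ k, |a k| = 1) (c : ℝ) (hc : 0 < c) :
    IntegrableOn (fun t : ℝ => (4 * Real.pi) ^ (-(1:ℝ)/2) * t ^ (-(3:ℝ)/2) *
      (∑' k : ℕ, a k * (((k:ℝ)+1) * Real.exp (-((k:ℝ)+1)^2 / (4*t)))) * Real.exp (-c^2 * t))
      (Ioi 0) ∧
    (∫ t in Ioi (0:ℝ), (4 * Real.pi) ^ (-(1:ℝ)/2) * t ^ (-(3:ℝ)/2) *
      (∑' k : ℕ, a k * (((k:ℝ)+1) * Real.exp (-((k:ℝ)+1)^2 / (4*t)))) * Real.exp (-c^2 * t))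
      = ∑' k : ℕ, a k * Real.exp (-(((k:ℝ)+1) * c)) := by
  set s := Real.sqrt Real.pi with hsdef
  have hs : (0:ℝ) < s := Real.sqrt_pos.2 Real.pi_pos
  set A : ℝ := (4 * Real.pi) ^ (-(1:ℝ)/2) with hAdef
  have hA : A = (2 * s)⁻¹ := A_mul_sqrt
  set F : ℕ → ℝ → ℝ := fun k t => (A * a k * ((k:ℝ)+1)) *
    (t ^ (-(3:ℝ)/2) * Real.exp (-(((k:ℝ)+1)^2 / (4*t)) - c^2*t)) with hFdef
  have hFk_int : ∀ k, Integrable (F k) (volume.restrict (Ioi 0)) := fun k =>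
    (core_integrable ((k:ℝ)+1) c (by positivity) hc).const_mul _
  have hFk_val : ∀ k, (∫ t in Ioi (0:ℝ), F k t) = a k * Real.exp (-(((k:ℝ)+1) * c)) := by
    intro k
    simp only [hFdef]
    rw [integral_const_mul, core_integral ((k:ℝ)+1) c (by positivity) hc, hA]
    have hk1 : ((k:ℝ)+1) ≠ 0 := by positivity
    field_simp
    ring
  have hFk_norm : ∀ k, (∫ t in Ioi (0:ℝ), ‖F k t‖) = Real.exp (-(((k:ℝ)+1) * c)) := by
    intro k
    have hcongr : ∀ t ∈ Ioi (0:ℝ), ‖F k t‖ = (A * ((k:ℝ)+1)) *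
        (t ^ (-(3:ℝ)/2) * Real.exp (-(((k:ℝ)+1)^2 / (4*t)) - c^2*t)) := by
      intro t ht
      simp only [mem_Ioi] at ht
      have hpos : (0:ℝ) < t ^ (-(3:ℝ)/2) := Real.rpow_pos_of_pos ht _
      have hApos : (0:ℝ) < A := by rw [hA]; positivity
      rw [Real.norm_eq_abs, abs_mul, abs_mul, abs_mul, ha k,
        abs_of_pos hApos, abs_of_pos (by positivity : (0:ℝ) < (k:ℝ)+1),
        abs_of_pos (mul_pos hpos (Real.exp_pos _))]
      ring
    rw [setIntegral_congr_fun measurableSet_Ioi hcongr, integral_const_mul,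
      core_integral ((k:ℝ)+1) c (by positivity) hc, hA]
    have hk1 : ((k:ℝ)+1) ≠ 0 := by positivity
    field_simp
    ring
  have hgeo : Summable fun k : ℕ => Real.exp (-(((k:ℝ)+1) * c)) := by
    have hb := (summable_geometric_of_lt_one (Real.exp_nonneg (-c))
      (Real.exp_lt_one_iff.2 (by linarith))).mul_left (Real.exp (-c))
    refine hb.congr fun k => ?_
    rw [← Real.exp_nat_mul, ← Real.exp_add]
    congr 1
    push_cast
    ring
  have hsummable' : Summable fun k : ℕ => ∫ t in Ioi (0:ℝ), ‖F k t‖ :=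
    hgeo.congr fun k => (hFk_norm k).symm
  have hpointwise : ∀ t ∈ Ioi (0:ℝ),
      A * t ^ (-(3:ℝ)/2) *
        (∑' k : ℕ, a k * (((k:ℝ)+1) * Real.exp (-((k:ℝ)+1)^2 / (4*t)))) *
        Real.exp (-c^2 * t)
      = ∑' k : ℕ, F k t := by
    intro t ht
    simp only [mem_Ioi] at ht
    have hterm : ∀ k : ℕ, F k t = (A * t ^ (-(3:ℝ)/2) * Real.exp (-c^2*t)) *
        (a k * (((k:ℝ)+1) * Real.exp (-((k:ℝ)+1)^2 / (4*t)))) := by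
      intro k
      simp only [hFdef]
      rw [show -(((k:ℝ)+1)^2 / (4*t)) - c^2*t
          = (-((k:ℝ)+1)^2 / (4*t)) + (-(c^2*t)) by ring, Real.exp_add]
      ring
    rw [tsum_congr hterm, tsum_mul_left]
    ring
  have hsum_ae : ∀ᵐ t ∂(volume.restrict (Ioi (0:ℝ))), Summable fun k => F k t := by
    filter_upwards [ae_restrict_mem measurableSet_Ioi] with t ht
    simp only [mem_Ioi] at ht
    have h1 : Summable fun k : ℕ =>
        a k * (((k:ℝ)+1) * Real.exp (-((k:ℝ)+1)^2 / (4*t))) := by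
      apply Summable.of_norm
      refine (summable_aux ht).congr fun k => ?_
      rw [norm_mul, Real.norm_eq_abs, ha k, one_mul, Real.norm_eq_abs,
        abs_of_pos (by positivity)]
    refine (h1.mul_left (A * t ^ (-(3:ℝ)/2) * Real.exp (-c^2*t))).congr fun k => ?_
    simp only [hFdef]
    rw [show -(((k:ℝ)+1)^2 / (4*t)) - c^2*t
        = -((k:ℝ)+1)^2 / (4*t) + -(c^2*t) by ring, Real.exp_add]
    ring
  constructor
  · refine IntegrableOn.congr_fun
      (integrable_tsum_helper hFk_int hsum_ae hsummable')
      (fun t ht => (hpointwise t ht).symm) measurableSet_Ioi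
  · rw [setIntegral_congr_fun measurableSet_Ioi hpointwise,
      ← integral_tsum_of_summable_integral_norm hFk_int hsummable']
    exact tsum_congr hFk_val

lemma hf_laplace (c : ℝ) (hc : 0 < c) :
    IntegrableOn (fun t : ℝ => hfKernel t * Real.exp (-c ^ 2 * t)) (Ioi 0) ∧
    (∫ t in Ioi (0:ℝ), hfKernel t * Real.exp (-c ^ 2 * t)) = 1 / (Real.exp c + 1) := by
  have hsg := series_integral (fun k => (-1:ℝ) ^ k)
    (fun k => by rw [abs_pow, abs_neg, abs_one, one_pow]) c hc
  have hfun : (fun t : ℝ => hfKernel t * Real.exp (-c ^ 2 * t))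
      = fun t : ℝ => (4 * Real.pi) ^ (-(1:ℝ)/2) * t ^ (-(3:ℝ)/2) *
        (∑' k : ℕ, (-1:ℝ) ^ k * (((k:ℝ)+1) * Real.exp (-((k:ℝ)+1)^2 / (4*t)))) *
        Real.exp (-c^2 * t) := by
    funext t
    rw [hfKernel]
    rw [tsum_congr (fun k : ℕ => (mul_assoc ((-1:ℝ)^k) ((k:ℝ)+1)
      (Real.exp (-((k:ℝ)+1)^2 / (4*t)))))]
  have hval : (∑' k : ℕ, (-1:ℝ) ^ k * Real.exp (-(((k:ℝ)+1) * c)))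
      = 1 / (Real.exp c + 1) := by
    have hterm : ∀ k : ℕ, (-1:ℝ) ^ k * Real.exp (-(((k:ℝ)+1) * c))
        = Real.exp (-c) * (-Real.exp (-c)) ^ k := by
      intro k
      have h2 : Real.exp (-(((k:ℝ)+1) * c)) = Real.exp (-c) * Real.exp (-c) ^ k := by
        rw [← Real.exp_nat_mul, ← Real.exp_add]; congr 1; ring
      rw [h2, neg_pow (Real.exp (-c)) k]
      ring
    rw [tsum_congr hterm, tsum_mul_left, tsum_geometric_of_norm_lt_one
      (by rw [norm_neg, Real.norm_eq_abs, abs_of_pos (Real.exp_pos _)]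
          exact Real.exp_lt_one_iff.2 (by linarith)), sub_neg_eq_add]
    have hx : (0:ℝ) < Real.exp c := Real.exp_pos c
    rw [Real.exp_neg, eq_div_iff (by positivity)]
    field_simp
  rw [hfun]
  exact ⟨hsg.1, by rw [hsg.2]; exact hval⟩

lemma hb_laplace (c : ℝ) (hc : 0 < c) :
    IntegrableOn (fun t : ℝ => hbKernel t * Real.exp (-c ^ 2 * t)) (Ioi 0) ∧
    (∫ t in Ioi (0:ℝ), hbKernel t * Real.exp (-c ^ 2 * t)) = 1 / (Real.exp c - 1) := by
  have hsg := series_integral (fun _ => (1:ℝ)) (fun k => abs_one) c hc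
  have hfun : (fun t : ℝ => hbKernel t * Real.exp (-c ^ 2 * t))
      = fun t : ℝ => (4 * Real.pi) ^ (-(1:ℝ)/2) * t ^ (-(3:ℝ)/2) *
        (∑' k : ℕ, (1:ℝ) * (((k:ℝ)+1) * Real.exp (-((k:ℝ)+1)^2 / (4*t)))) *
        Real.exp (-c^2 * t) := by
    funext t
    rw [hbKernel]
    rw [tsum_congr (fun k : ℕ => (one_mul (((k:ℝ)+1) *
      Real.exp (-((k:ℝ)+1)^2 / (4*t)))).symm)]
  have hval : (∑' k : ℕ, (1:ℝ) * Real.exp (-(((k:ℝ)+1) * c)))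
      = 1 / (Real.exp c - 1) := by
    have hterm : ∀ k : ℕ, (1:ℝ) * Real.exp (-(((k:ℝ)+1) * c))
        = Real.exp (-c) * (Real.exp (-c)) ^ k := by
      intro k
      rw [one_mul, ← Real.exp_nat_mul, ← Real.exp_add]
      rw [show -c + (k:ℝ) * -c = -(((k:ℝ)+1) * c) by ring]
    have hlt : Real.exp (-c) < 1 := Real.exp_lt_one_iff.2 (by linarith)
    rw [tsum_congr hterm, tsum_mul_left, tsum_geometric_of_lt_one
      (Real.exp_nonneg _) hlt]
    have hx : (0:ℝ) < Real.exp c := Real.exp_pos c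
    have hx1 : (1:ℝ) < Real.exp c := by
      rw [← Real.exp_zero]; exact Real.exp_lt_exp.2 hc
    rw [Real.exp_neg, eq_div_iff (by linarith : Real.exp c - 1 ≠ 0)]
    field_simp
    exact div_self (by linarith)
  rw [hfun]
  exact ⟨hsg.1, by rw [hsg.2]; exact hval⟩

/-- Scalar, one-mode version of the heat-trace representation of the bosonic
Bogolyubov invariant `B_b(β)`: with `ω_± = √(λ_± + m²)`,
`(1/(e^{βω₊}+1) − 1/(e^{βω₋}+1)) (1/(e^{βω₊}−1) − 1/(e^{βω₋}−1))
  = ∫₀^∞∫₀^∞ h_f(t) h_b(s) e^{−m²β²(t+s)} (e^{−tβ²λ₊} − e^{−tβ²λ₋})(e^{−sβ²λ₊} − e^{−sβ²λ₋}) dt ds`,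
the double integral being absolutely convergent. -/
theorem bogolyubov_invariant_one_mode (β m lp lm : ℝ) (hβ : 0 < β) (hm : 0 < m)
    (hlp : 0 ≤ lp) (hlm : 0 ≤ lm) :
    Integrable
      (fun p : ℝ × ℝ =>
        hfKernel p.1 * hbKernel p.2 * Real.exp (-m ^ 2 * β ^ 2 * (p.1 + p.2)) *
          (Real.exp (-p.1 * β ^ 2 * lp) - Real.exp (-p.1 * β ^ 2 * lm)) *
          (Real.exp (-p.2 * β ^ 2 * lp) - Real.exp (-p.2 * β ^ 2 * lm)))
      ((volume.restrict (Set.Ioi (0 : ℝ))).prod (volume.restrict (Set.Ioi (0 : ℝ)))) ∧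
    (1 / (Real.exp (β * Real.sqrt (lp + m ^ 2)) + 1) -
        1 / (Real.exp (β * Real.sqrt (lm + m ^ 2)) + 1)) *
      (1 / (Real.exp (β * Real.sqrt (lp + m ^ 2)) - 1) -
        1 / (Real.exp (β * Real.sqrt (lm + m ^ 2)) - 1))
      = ∫ t in Set.Ioi (0 : ℝ), ∫ s in Set.Ioi (0 : ℝ),
          hfKernel t * hbKernel s * Real.exp (-m ^ 2 * β ^ 2 * (t + s)) *
            (Real.exp (-t * β ^ 2 * lp) - Real.exp (-t * β ^ 2 * lm)) *
            (Real.exp (-s * β ^ 2 * lp) - Real.exp (-s * β ^ 2 * lm)) := by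
  set cp := β * Real.sqrt (lp + m ^ 2) with hcpdef
  set cm := β * Real.sqrt (lm + m ^ 2) with hcmdef
  have hmp : (0:ℝ) < lp + m ^ 2 := add_pos_of_nonneg_of_pos hlp (by positivity)
  have hmm : (0:ℝ) < lm + m ^ 2 := add_pos_of_nonneg_of_pos hlm (by positivity)
  have hcp : 0 < cp := mul_pos hβ (Real.sqrt_pos.2 hmp)
  have hcm : 0 < cm := mul_pos hβ (Real.sqrt_pos.2 hmm)
  have hcp2 : cp ^ 2 = β ^ 2 * (lp + m ^ 2) := by
    rw [hcpdef, mul_pow, Real.sq_sqrt hmp.le]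
  have hcm2 : cm ^ 2 = β ^ 2 * (lm + m ^ 2) := by
    rw [hcmdef, mul_pow, Real.sq_sqrt hmm.le]
  set F : ℝ → ℝ := fun t => hfKernel t * Real.exp (-cp ^ 2 * t) -
    hfKernel t * Real.exp (-cm ^ 2 * t) with hFdef
  set G : ℝ → ℝ := fun s => hbKernel s * Real.exp (-cp ^ 2 * s) -
    hbKernel s * Real.exp (-cm ^ 2 * s) with hGdef
  have hFint : IntegrableOn F (Ioi 0) := (hf_laplace cp hcp).1.sub (hf_laplace cm hcm).1
  have hGint : IntegrableOn G (Ioi 0) := (hb_laplace cp hcp).1.sub (hb_laplace cm hcm).1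
  have hFval : (∫ t in Ioi (0:ℝ), F t)
      = 1 / (Real.exp cp + 1) - 1 / (Real.exp cm + 1) := by
    simp only [hFdef]
    rw [integral_sub (hf_laplace cp hcp).1 (hf_laplace cm hcm).1,
      (hf_laplace cp hcp).2, (hf_laplace cm hcm).2]
  have hGval : (∫ s in Ioi (0:ℝ), G s)
      = 1 / (Real.exp cp - 1) - 1 / (Real.exp cm - 1) := by
    simp only [hGdef]
    rw [integral_sub (hb_laplace cp hcp).1 (hb_laplace cm hcm).1,
      (hb_laplace cp hcp).2, (hb_laplace cm hcm).2]
  have key : ∀ t s : ℝ,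
      hfKernel t * hbKernel s * Real.exp (-m ^ 2 * β ^ 2 * (t + s)) *
        (Real.exp (-t * β ^ 2 * lp) - Real.exp (-t * β ^ 2 * lm)) *
        (Real.exp (-s * β ^ 2 * lp) - Real.exp (-s * β ^ 2 * lm)) = F t * G s := by
    intro t s
    simp only [hFdef, hGdef]
    rw [hcp2, hcm2,
      show -m ^ 2 * β ^ 2 * (t + s) = (-m ^ 2 * β ^ 2 * t) + (-m ^ 2 * β ^ 2 * s) by ring,
      Real.exp_add,
      show -(β ^ 2 * (lp + m ^ 2)) * t = (-m ^ 2 * β ^ 2 * t) + (-t * β ^ 2 * lp) by ring,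
      Real.exp_add,
      show -(β ^ 2 * (lm + m ^ 2)) * t = (-m ^ 2 * β ^ 2 * t) + (-t * β ^ 2 * lm) by ring,
      Real.exp_add,
      show -(β ^ 2 * (lp + m ^ 2)) * s = (-m ^ 2 * β ^ 2 * s) + (-s * β ^ 2 * lp) by ring,
      Real.exp_add,
      show -(β ^ 2 * (lm + m ^ 2)) * s = (-m ^ 2 * β ^ 2 * s) + (-s * β ^ 2 * lm) by ring,
      Real.exp_add]
    ring
  constructor
  · exact (hFint.mul_prod hGint).congr (ae_of_all _ fun p => (key p.1 p.2).symm)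
  · have hright : (∫ t in Ioi (0:ℝ), ∫ s in Ioi (0:ℝ),
        hfKernel t * hbKernel s * Real.exp (-m ^ 2 * β ^ 2 * (t + s)) *
          (Real.exp (-t * β ^ 2 * lp) - Real.exp (-t * β ^ 2 * lm)) *
          (Real.exp (-s * β ^ 2 * lp) - Real.exp (-s * β ^ 2 * lm)))
        = (∫ t in Ioi (0:ℝ), F t) * ∫ s in Ioi (0:ℝ), G s := by
      rw [setIntegral_congr_fun measurableSet_Ioi (fun t _ => by
        rw [setIntegral_congr_fun measurableSet_Ioi (fun s _ => key t s),
          integral_const_mul] :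
        ∀ t ∈ Ioi (0:ℝ), (∫ s in Ioi (0:ℝ),
          hfKernel t * hbKernel s * Real.exp (-m ^ 2 * β ^ 2 * (t + s)) *
            (Real.exp (-t * β ^ 2 * lp) - Real.exp (-t * β ^ 2 * lm)) *
            (Real.exp (-s * β ^ 2 * lp) - Real.exp (-s * β ^ 2 * lm)))
          = F t * ∫ s in Ioi (0:ℝ), G s)]
      exact integral_mul_const _ _
    rw [hright, hFval, hGval]
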